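/- Soundness of C_nᴰ with respect to swap Kripke models: let n ≥ 2; for every set of formulas Γ ∪ {φ} ⊆ For(Σ₁ᴰ), if Γ ⊢_{C_nᴰ} φ then Γ ⊨_{C_nᴰ} φ. -/

import Mathlib

/-! Designation only reads the first coordinate, on which the multioperations for ∧, ∨, → and
O are the classical truth tables and the Kripke clause for O; this validates the positive
axioms, (O-K), (EM), (cf), MP and necessitation. The heart of the matter is that α⁽ⁿ⁾ is
designated exactly when v(α) is Boolean: Boolean values make every αᵏ equal to T, while
restrictions (i) and (ii) force v(α) = tₖ to make αᵏ⁺¹ equal to F. Then (bcₙ), (Pₙ) and (POₙ)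
reduce to the Boolean clauses of the multioperations and to restriction (iii), and (Dₙ) to
seriality. -/

/-- Formulas over the signature Σ₁ᴰ = {∧, ∨, →, ¬, O}, with countably many
propositional variables. -/
inductive Form : Type
  | var : ℕ → Form
  | and : Form → Form → Form
  | or : Form → Form → Form
  | imp : Form → Form → Form
  | neg : Form → Form
  | obl : Form → Form

namespace Form

/-- α⁰ = α, α^{k+1} = ¬(α^k ∧ ¬α^k). -/
def pow (α : Form) : ℕ → Form
  | 0 => α
  | k + 1 => ((α.pow k).and (α.pow k).neg).neg

/-- α^{(n)} = α¹ ∧ … ∧ αⁿ (for n ≥ 1). -/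
def bigPow (α : Form) : ℕ → Form
  | 0 => α.pow 1
  | 1 => α.pow 1
  | m + 2 => (α.bigPow (m + 1)).and (α.pow (m + 2))

/-- ∼^{(n)}α := ¬α ∧ α^{(n)}. -/
def snn (n : ℕ) (α : Form) : Form := α.neg.and (α.bigPow n)

end Form

/-- The n+2 snapshots of the swap structure for C_nᴰ: T_n, t^n_0, …, t^n_{n-1}, F_n. -/
inductive SVn (n : ℕ) : Type
  | T : SVn n
  | t : Fin n → SVn n
  | F : SVn n
deriving DecidableEq

namespace SVn

/-- The coordinates of a snapshot, as an element of 2^{n+1} (0-indexed):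
T_n = (1,0,1,…,1), t^n_i has its unique 0 at (0-indexed) position i+2
(so t^n_{n-1} = (1,…,1)), and F_n = (0,1,…,1). -/
def coord {n : ℕ} : SVn n → Fin (n + 1) → Bool
  | .T, j => decide (j.val ≠ 1)
  | .t i, j => decide (j.val ≠ i.val + 2)
  | .F, j => decide (j.val ≠ 0)

/-- First coordinate z₁. -/
def p1 {n : ℕ} (z : SVn n) : Bool := z.coord 0

/-- Second coordinate z₂. -/
def p2 {n : ℕ} (z : SVn n) : Bool := z.coord 1

/-- Designated values D_n = A_n ∖ {F_n}, i.e. first coordinate 1. -/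
def desig {n : ℕ} (z : SVn n) : Prop := z.p1 = true

/-- Boolean values Boo_n = {T_n, F_n}. -/
def boo {n : ℕ} (z : SVn n) : Prop := z = SVn.T ∨ z = SVn.F

/-- Inconsistent values I_n = A_n ∖ Boo_n. -/
def incons {n : ℕ} (z : SVn n) : Prop := ∃ i : Fin n, z = SVn.t i

end SVn

/-- Boolean implication a ⊃ b. -/
def boolImp (a b : Bool) : Bool := !a || b

/-- Membership of c in a #̃ b for a binary connective # with Boolean counterpart
`op`: c₁ = a₁ op b₁, and moreover c ∈ Boo_n whenever a, b ∈ Boo_n. -/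
def opCond {n : ℕ} (op : Bool → Bool → Bool) (c a b : SVn n) : Prop :=
  c.p1 = op a.p1 b.p1 ∧ (a.boo → b.boo → c.boo)

/-- Swap Kripke pre-model conditions for C_nᴰ on a serial frame (W,R) with
valuations v_w : Form → A_n. -/
structure IsPreModelCnD (n : ℕ) {W : Type} (R : W → W → Prop)
    (v : W → Form → SVn n) : Prop where
  serial : ∀ w, ∃ w', R w w'
  and_ : ∀ w α β, opCond (· && ·) (v w (α.and β)) (v w α) (v w β)
  or_ : ∀ w α β, opCond (· || ·) (v w (α.or β)) (v w α) (v w β)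
  imp_ : ∀ w α β, opCond boolImp (v w (α.imp β)) (v w α) (v w β)
  neg_ : ∀ w α, (v w α.neg).p1 = (v w α).p2 ∧ (v w α.neg).p2 ≤ (v w α).p1
  obl_ : ∀ w α, ((v w α.obl).p1 = true ↔ ∀ w', R w w' → (v w' α).p1 = true)

/-- The RNmatrix restrictions on valuations:
(i) v_w(α) = t^n_0 implies v_w(α ∧ ¬α) = T_n;
(ii) for 1 ≤ k ≤ n−1, v_w(α) = t^n_k implies v_w(α ∧ ¬α) ∈ I_n and
v_w(α¹) = t^n_{k−1}. -/
def RestrCnD (n : ℕ) {W : Type} (v : W → Form → SVn n) : Prop :=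
  (∀ (w : W) (α : Form) (h0 : 0 < n),
      v w α = SVn.t ⟨0, h0⟩ → v w (α.and α.neg) = SVn.T) ∧
  (∀ (w : W) (α : Form) (k : ℕ) (hk : k < n), 1 ≤ k → v w α = SVn.t ⟨k, hk⟩ →
      (v w (α.and α.neg)).incons ∧ v w (α.pow 1) = SVn.t ⟨k - 1, by omega⟩)

/-- A swap Kripke model for C_nᴰ: a pre-model satisfying the restrictions (i), (ii)
and (iii): v_w(α) ∈ Boo_n implies v_w(Oα) ∈ Boo_n. -/
structure IsModelCnD (n : ℕ) {W : Type} (R : W → W → Prop)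
    (v : W → Form → SVn n) : Prop where
  pre : IsPreModelCnD n R v
  restr : RestrCnD n v
  booObl : ∀ w α, (v w α).boo → (v w α.obl).boo

/-- Theorems of the Hilbert calculus C_nᴰ: CPL⁺ axioms, (EM), (cf), (bc_n), (P_n),
(O-K), (D_n), (PO_n), with rules Modus Ponens and O-necessitation. -/
inductive ThmCnD (n : ℕ) : Form → Prop
  | A1 (α β : Form) : ThmCnD n (α.imp (β.imp α))
  | A2 (α β γ : Form) : ThmCnD n ((α.imp (β.imp γ)).imp ((α.imp β).imp (α.imp γ)))
  | A3 (α β : Form) : ThmCnD n (α.imp (β.imp (α.and β)))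
  | A4 (α β : Form) : ThmCnD n ((α.and β).imp α)
  | A5 (α β : Form) : ThmCnD n ((α.and β).imp β)
  | A6 (α β : Form) : ThmCnD n (α.imp (α.or β))
  | A7 (α β : Form) : ThmCnD n (β.imp (α.or β))
  | A8 (α β γ : Form) : ThmCnD n ((α.imp γ).imp ((β.imp γ).imp ((α.or β).imp γ)))
  | A9 (α β : Form) : ThmCnD n (((α.imp β).imp α).imp α)
  | EM (α : Form) : ThmCnD n (α.or α.neg)
  | cf (α : Form) : ThmCnD n (α.neg.neg.imp α)
  | bcn (α β : Form) : ThmCnD n ((α.bigPow n).imp (α.imp (α.neg.imp β)))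
  | Pn (α β : Form) : ThmCnD n (((α.bigPow n).and (β.bigPow n)).imp
      (((α.imp β).bigPow n).and (((α.or β).bigPow n).and ((α.and β).bigPow n))))
  | OK (α β : Form) : ThmCnD n ((α.imp β).obl.imp (α.obl.imp β.obl))
  | Dn (α : Form) : ThmCnD n (α.obl.imp (Form.snn n ((Form.snn n α).obl)))
  | POn (α : Form) : ThmCnD n ((α.bigPow n).imp (α.obl.bigPow n))
  | mp {α β : Form} : ThmCnD n (α.imp β) → ThmCnD n α → ThmCnD n β
  | nec {α : Form} : ThmCnD n α → ThmCnD n α.obl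

/-- conj γ [γ₂,…,γ_k] = γ ∧ γ₂ ∧ … ∧ γ_k -/
def conj (γ : Form) : List Form → Form
  | [] => γ
  | δ :: l => γ.and (conj δ l)

/-- Γ ⊢_{C_nᴰ} φ iff ⊢ φ or ⊢ (γ₁ ∧ … ∧ γ_k) → φ for some γ₁,…,γ_k ∈ Γ, k ≥ 1. -/
def DerivCnD (n : ℕ) (Γ : Set Form) (φ : Form) : Prop :=
  ThmCnD n φ ∨ ∃ (γ : Form) (l : List Form),
    (∀ δ ∈ γ :: l, δ ∈ Γ) ∧ ThmCnD n ((conj γ l).imp φ)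

/-- Γ ⊨_{C_nᴰ} φ : semantic consequence over all swap Kripke models for C_nᴰ. -/
def SemCnD (n : ℕ) (Γ : Set Form) (φ : Form) : Prop :=
  ∀ (W : Type) (R : W → W → Prop) (v : W → Form → SVn n), Nonempty W →
    IsModelCnD n R v → ∀ w : W, (∀ γ ∈ Γ, (v w γ).desig) → (v w φ).desig

namespace SVn

variable {n m : ℕ}

@[simp] theorem p1_T : (T : SVn n).p1 = true := by simp [p1, coord]

@[simp] theorem p1_t (i : Fin n) : (t i).p1 = true := by simp [p1, coord]

@[simp] theorem p1_F : (F : SVn n).p1 = false := by simp [p1, coord]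

@[simp] theorem p2_T : (T : SVn (m + 1)).p2 = false := by simp [p2, coord]

@[simp] theorem p2_t (i : Fin (m + 1)) : (t i).p2 = true := by simp [p2, coord]

@[simp] theorem p2_F : (F : SVn (m + 1)).p2 = true := by simp [p2, coord]

theorem p1_eq_false_iff {z : SVn n} : z.p1 = false ↔ z = F := by
  cases z <;> simp

theorem eq_T_of_p2_eq_false {z : SVn (m + 1)} (h1 : z.p1 = true) (h2 : z.p2 = false) :
    z = T := by
  cases z <;> simp_all

theorem boo_T : (T : SVn n).boo := Or.inl rfl

theorem boo_F : (F : SVn n).boo := Or.inr rfl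

theorem boo.eq_T_of_p1 {z : SVn n} (hz : z.boo) (h : z.p1 = true) : z = T := by
  rcases hz with rfl | rfl
  · rfl
  · simp at h

end SVn

namespace Form

theorem pow_succ_eq_pow_one_pow (α : Form) (k : ℕ) : α.pow (k + 1) = (α.pow k).pow 1 := rfl

theorem pow_one_pow (α : Form) (k : ℕ) : (α.pow 1).pow k = α.pow (k + 1) := by
  induction k with
  | zero => rfl
  | succ k ih => exact congrArg (fun β => (β.and β.neg).neg) ih

end Form

namespace IsPreModelCnD

variable {n m : ℕ} {W : Type} {R : W → W → Prop} {v : W → Form → SVn n} {w : W} {α β : Form}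

theorem p1_and (hM : IsPreModelCnD n R v) :
    (v w (α.and β)).p1 = true ↔ (v w α).p1 = true ∧ (v w β).p1 = true := by
  simp [(hM.and_ w α β).1]

theorem p1_or (hM : IsPreModelCnD n R v) :
    (v w (α.or β)).p1 = true ↔ (v w α).p1 = true ∨ (v w β).p1 = true := by
  simp [(hM.or_ w α β).1]

theorem p1_imp (hM : IsPreModelCnD n R v) :
    (v w (α.imp β)).p1 = true ↔ ((v w α).p1 = true → (v w β).p1 = true) := by
  cases h : (v w α).p1 <;> simp [(hM.imp_ w α β).1, boolImp, h]

theorem p1_conj (hM : IsPreModelCnD n R v) (γ : Form) (l : List Form) :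
    (v w (conj γ l)).p1 = true ↔ ∀ δ ∈ γ :: l, (v w δ).p1 = true := by
  induction l generalizing γ with
  | nil => simp [conj]
  | cons δ l ih => simp [conj, hM.p1_and, ih]

theorem bigPow_p1_eq_false (hM : IsPreModelCnD n R v) {j : ℕ}
    (hj : (v w (α.pow j)).p1 = false) (hj1 : 1 ≤ j) :
    ∀ k, j ≤ k → (v w (α.bigPow k)).p1 = false := by
  intro k
  induction k using Form.bigPow.induct with
  | case1 => omega
  | case2 =>
    intro hjk
    obtain rfl : j = 1 := by omega
    exact hj
  | case3 k ih =>
    intro hjk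
    rw [Form.bigPow, (hM.and_ w _ _).1]
    rcases Nat.lt_or_ge j (k + 2) with hlt | hge
    · simp [ih (by omega)]
    · obtain rfl : j = k + 2 := by omega
      simp [hj]

theorem valid_cf (hM : IsPreModelCnD n R v) : (v w (α.neg.neg.imp α)).p1 = true := by
  rw [hM.p1_imp, (hM.neg_ w α.neg).1]
  exact fun h => le_antisymm (Bool.le_true _) (h ▸ (hM.neg_ w α).2)

theorem valid_OK (hM : IsPreModelCnD n R v) :
    (v w ((α.imp β).obl.imp (α.obl.imp β.obl))).p1 = true := by
  simp only [hM.p1_imp, hM.obl_]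
  exact fun hαβ hα w' hw' => hαβ w' hw' (hα w' hw')

variable {v : W → Form → SVn (m + 1)}

theorem neg_eq_F_of_eq_T (hM : IsPreModelCnD (m + 1) R v) (h : v w α = .T) :
    v w α.neg = .F :=
  SVn.p1_eq_false_iff.mp (by simp [(hM.neg_ w α).1, h])

theorem neg_eq_T_of_eq_F (hM : IsPreModelCnD (m + 1) R v) (h : v w α = .F) :
    v w α.neg = .T := by
  have h2 := (hM.neg_ w α).2
  rw [h, SVn.p1_F] at h2
  exact SVn.eq_T_of_p2_eq_false (by simp [(hM.neg_ w α).1, h]) (Bool.eq_false_of_le_false h2)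

theorem pow_one_eq_T_of_boo (hM : IsPreModelCnD (m + 1) R v) (h : (v w α).boo) :
    v w (α.pow 1) = .T := by
  have hF : v w (α.and α.neg) = .F := by
    refine SVn.p1_eq_false_iff.mp ?_
    rcases h with h | h
    · simp [(hM.and_ w _ _).1, h, hM.neg_eq_F_of_eq_T h]
    · simp [(hM.and_ w _ _).1, h]
  exact hM.neg_eq_T_of_eq_F hF

theorem pow_succ_eq_T_of_boo (hM : IsPreModelCnD (m + 1) R v) (h : (v w α).boo) (k : ℕ) :
    v w (α.pow (k + 1)) = .T := by
  induction k with
  | zero => exact hM.pow_one_eq_T_of_boo h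
  | succ k ih =>
    rw [Form.pow_succ_eq_pow_one_pow]
    exact hM.pow_one_eq_T_of_boo (ih ▸ SVn.boo_T)

theorem bigPow_eq_T_of_boo (hM : IsPreModelCnD (m + 1) R v) (h : (v w α).boo) (k : ℕ) :
    v w (α.bigPow k) = .T := by
  induction k using Form.bigPow.induct with
  | case1 | case2 => exact hM.pow_succ_eq_T_of_boo h 0
  | case3 k ih =>
    have hand := hM.and_ w (α.bigPow (k + 1)) (α.pow (k + 2))
    rw [ih, hM.pow_succ_eq_T_of_boo h (k + 1)] at hand
    exact (hand.2 SVn.boo_T SVn.boo_T).eq_T_of_p1 (by simp [hand.1])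

theorem valid_EM (hM : IsPreModelCnD (m + 1) R v) :
    (v w (α.or α.neg)).p1 = true := by
  rw [hM.p1_or, (hM.neg_ w α).1]
  cases v w α <;> simp

end IsPreModelCnD

namespace IsModelCnD

variable {m : ℕ} {W : Type} {R : W → W → Prop} {v : W → Form → SVn (m + 1)} {w : W}
  {α β : Form}

theorem pow_succ_eq_F_of_eq_t (hM : IsModelCnD (m + 1) R v) (k : ℕ) (hk : k < m + 1)
    (h : v w α = .t ⟨k, hk⟩) : v w (α.pow (k + 1)) = .F := by
  induction k generalizing α with
  | zero => exact hM.pre.neg_eq_F_of_eq_T (hM.restr.1 w α hk h)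
  | succ k ih =>
    have h1 : v w (α.pow 1) = .t ⟨k, by omega⟩ := (hM.restr.2 w α (k + 1) hk (by omega) h).2
    rw [← Form.pow_one_pow]
    exact ih (by omega) h1

theorem bigPow_p1_eq_false_of_eq_t (hM : IsModelCnD (m + 1) R v) {i : Fin (m + 1)}
    (h : v w α = .t i) : (v w (α.bigPow (m + 1))).p1 = false :=
  hM.pre.bigPow_p1_eq_false (j := i + 1)
    (by rw [hM.pow_succ_eq_F_of_eq_t i i.isLt h, SVn.p1_F]) (by omega) (m + 1) i.isLt

theorem bigPow_p1_iff_boo (hM : IsModelCnD (m + 1) R v) :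
    (v w (α.bigPow (m + 1))).p1 = true ↔ (v w α).boo := by
  refine ⟨fun h => ?_, fun h => by rw [hM.pre.bigPow_eq_T_of_boo h, SVn.p1_T]⟩
  rcases hα : v w α with _ | i | _
  · exact SVn.boo_T
  · simp [hM.bigPow_p1_eq_false_of_eq_t hα] at h
  · exact SVn.boo_F

theorem snn_eq_T_of_eq_F (hM : IsModelCnD (m + 1) R v) (h : v w α = .F) :
    v w (Form.snn (m + 1) α) = .T := by
  have hand := hM.pre.and_ w α.neg (α.bigPow (m + 1))
  rw [hM.pre.neg_eq_T_of_eq_F h, hM.pre.bigPow_eq_T_of_boo (h ▸ SVn.boo_F)] at hand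
  exact (hand.2 SVn.boo_T SVn.boo_T).eq_T_of_p1 (by simp [hand.1])

theorem snn_eq_F_of_ne_F (hM : IsModelCnD (m + 1) R v) (h : v w α ≠ .F) :
    v w (Form.snn (m + 1) α) = .F := by
  refine SVn.p1_eq_false_iff.mp ?_
  rw [Form.snn, (hM.pre.and_ w _ _).1]
  rcases hα : v w α with _ | i | _
  · simp [(hM.pre.neg_ w α).1, hα]
  · simp [hM.bigPow_p1_eq_false_of_eq_t hα]
  · exact absurd hα h

theorem valid_bcn (hM : IsModelCnD (m + 1) R v) :
    (v w ((α.bigPow (m + 1)).imp (α.imp (α.neg.imp β)))).p1 = true := by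
  simp only [hM.pre.p1_imp, hM.bigPow_p1_iff_boo, (hM.pre.neg_ w α).1]
  rintro (hα | hα) <;> simp [hα]

theorem valid_Pn (hM : IsModelCnD (m + 1) R v) :
    (v w (((α.bigPow (m + 1)).and (β.bigPow (m + 1))).imp (((α.imp β).bigPow (m + 1)).and
      (((α.or β).bigPow (m + 1)).and ((α.and β).bigPow (m + 1)))))).p1 = true := by
  simp only [hM.pre.p1_imp, hM.pre.p1_and, hM.bigPow_p1_iff_boo]
  exact fun ⟨hα, hβ⟩ =>
    ⟨(hM.pre.imp_ w α β).2 hα hβ, (hM.pre.or_ w α β).2 hα hβ, (hM.pre.and_ w α β).2 hα hβ⟩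

theorem valid_Dn (hM : IsModelCnD (m + 1) R v) :
    (v w (α.obl.imp (Form.snn (m + 1) (Form.snn (m + 1) α).obl))).p1 = true := by
  rw [hM.pre.p1_imp]
  intro hα
  obtain ⟨w', hw'⟩ := hM.pre.serial w
  have hα' : v w' α ≠ .F := fun h => by simpa [h] using (hM.pre.obl_ w α).1 hα w' hw'
  have hF : v w (Form.snn (m + 1) α).obl = .F := by
    refine SVn.p1_eq_false_iff.mp (Bool.eq_false_iff.mpr fun h => ?_)
    simpa [hM.snn_eq_F_of_ne_F hα'] using (hM.pre.obl_ w _).1 h w' hw'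
  rw [hM.snn_eq_T_of_eq_F hF, SVn.p1_T]

theorem valid_POn (hM : IsModelCnD (m + 1) R v) :
    (v w ((α.bigPow (m + 1)).imp (α.obl.bigPow (m + 1)))).p1 = true := by
  simp only [hM.pre.p1_imp, hM.bigPow_p1_iff_boo]
  exact hM.booObl w α

end IsModelCnD

theorem ThmCnD.valid {m : ℕ} {W : Type} {R : W → W → Prop} {v : W → Form → SVn (m + 1)}
    (hM : IsModelCnD (m + 1) R v) {ψ : Form} (h : ThmCnD (m + 1) ψ) (w : W) :
    (v w ψ).p1 = true := by
  have hP := hM.pre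
  induction h generalizing w with
  | A1 | A2 | A3 | A4 | A5 | A6 | A7 | A8 | A9 =>
    simp only [hP.p1_imp, hP.p1_and, hP.p1_or]
    tauto
  | EM => exact hP.valid_EM
  | cf => exact hP.valid_cf
  | bcn => exact hM.valid_bcn
  | Pn => exact hM.valid_Pn
  | OK => exact hP.valid_OK
  | Dn => exact hM.valid_Dn
  | POn => exact hM.valid_POn
  | mp _ _ ihαβ ihα => exact hP.p1_imp.mp (ihαβ w) (ihα w)
  | nec _ ih => exact (hP.obl_ w _).2 fun w' _ => ih w'

/-- Soundness of C_nᴰ (n ≥ 2) w.r.t. swap Kripke models. -/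
theorem CnD_soundness (n : ℕ) (hn : 2 ≤ n) (Γ : Set Form) (φ : Form) :
    DerivCnD n Γ φ → SemCnD n Γ φ := by
  obtain ⟨m, rfl⟩ : ∃ m, n = m + 1 := ⟨n - 1, by omega⟩
  rintro (hφ | ⟨γ, l, hΓl, hγφ⟩) W R v - hM w hΓ
  · exact hφ.valid hM w
  · have hΓ' : (v w (conj γ l)).p1 = true :=
      (hM.pre.p1_conj γ l).mpr fun δ hδ => hΓ δ (hΓl δ hδ)
    exact hM.pre.p1_imp.mp (hγφ.valid hM w) hΓ'
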